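/- Let n ≥ 1, h ∈ {0,1}^n, L ≥ 1, let X = (x_0,…,x_{L−1}) be any sequence in the support of the snake distribution D_{h,L} on {0,1}^n, and fix an index j with n ≤ j ≤ L−1 and a vertex v ∈ {0,1}^n. Let k = Δ(x_j, v, (j−1) mod n), and let Y = (y_0,…,y_{L−1}) be obtained from X by flicking the tail at j. Then Pr_Y[v ∈ {y_{j−n},…,y_j}] = 2^{−k}. -/
import Mathlib


/-- Flip bit `t mod n` of a vertex of the Boolean hypercube `{0,1}^n`. -/
def flipBitHC {n : ℕ} (x : Fin n → Bool) (t : ℕ) : Fin n → Bool :=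
  fun i => if (i : ℕ) = t % n then !(x i) else x i

/-- Regrow a tail backwards from `start` (the vertex at time `j`): after `k` backward
steps we are at time `j - k`, each step keeping or flipping bit `(time) mod n`. -/
def flickAux {n : ℕ} (start : Fin n → Bool) (j : ℕ) (b : ℕ → Bool) :
    ℕ → (Fin n → Bool)
  | 0 => start
  | k + 1 =>
      if b (j - (k + 1)) then flipBitHC (flickAux start j b k) (j - (k + 1))
      else flickAux start j b k

/-- The snake obtained from `x` by flicking the tail at `j` with fresh coins `b`. -/
def flickTail {n : ℕ} (x : ℕ → Fin n → Bool) (j : ℕ) (b : ℕ → Bool) (t : ℕ) :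
    Fin n → Bool :=
  if j ≤ t then x t else flickAux (x j) j b (j - t)

/-- Extend a finite string of coin flips to an infinite one (by `false`). -/
def extBits {s : ℕ} (ω : Fin s → Bool) : ℕ → Bool :=
  fun t => if ht : t < s then ω ⟨t, ht⟩ else false

/-- `delta n x v i` is the smallest `k` such that `x` agrees with `v` on every
coordinate outside `{i, i-1, …, i-k+1}` (indices mod `n`). -/
noncomputable def delta {α : Type*} (n : ℕ) (x v : Fin n → α) (i : ℕ) : ℕ :=
  sInf {k | ∀ j : Fin n, (∀ l < k, (j : ℕ) ≠ (i + n - l) % n) → x j = v j}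

/-- Probability of an event on a finite sample space, under the uniform distribution. -/
noncomputable def unifPr {Ω : Type*} [Fintype Ω] (P : Ω → Prop) : ℝ :=
  (Nat.card {ω : Ω // P ω} : ℝ) / (Fintype.card Ω : ℝ)

lemma mod_ne_of_lt' {n a b : ℕ} (hn : 0 < n) (hab : a < b) (h : b < a + n) :
    a % n ≠ b % n := by
  intro h'
  have hd : n ∣ b - a := (Nat.modEq_iff_dvd' hab.le).mp h'
  have := Nat.le_of_dvd (by omega) hd
  omega

lemma flickAux_eq_of_ne {n : ℕ} (hn : 0 < n) (x0 : Fin n → Bool) (j : ℕ) (hj : n ≤ j)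
    (b : ℕ → Bool) (k : ℕ) (hk : k ≤ n) (i : Fin n)
    (hi : ∀ s, 1 ≤ s → s ≤ k → (i : ℕ) ≠ (j - s) % n) :
    flickAux x0 j b k i = x0 i := by
  induction k with
  | zero => rfl
  | succ k ih =>
    have hik : (i : ℕ) ≠ (j - (k + 1)) % n := hi (k + 1) (by omega) le_rfl
    have hrest : flickAux x0 j b k i = x0 i :=
      ih (by omega) (fun s h1 h2 => hi s h1 (by omega))
    simp only [flickAux]
    split
    · simp only [flipBitHC, if_neg hik]; exact hrest
    · exact hrest

lemma flickAux_eq_of_mem {n : ℕ} (hn : 0 < n) (x0 : Fin n → Bool) (j : ℕ) (hj : n ≤ j)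
    (b : ℕ → Bool) (k : ℕ) (hk : k ≤ n) (s : ℕ) (hs1 : 1 ≤ s) (hs2 : s ≤ k) (i : Fin n)
    (hi : (i : ℕ) = (j - s) % n) :
    flickAux x0 j b k i = xor (b (j - s)) (x0 i) := by
  induction k with
  | zero => omega
  | succ k ih =>
    rcases Nat.lt_or_ge s (k + 1) with hsk | hsk
    · have hik : (i : ℕ) ≠ (j - (k + 1)) % n := by
        rw [hi]
        exact (mod_ne_of_lt' hn (by omega) (by omega)).symm
      have hrest := ih (by omega) (by omega)
      simp only [flickAux]
      split
      · simp only [flipBitHC, if_neg hik]; exact hrest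
      · exact hrest
    · have hseq : s = k + 1 := by omega
      subst hseq
      have hrest : flickAux x0 j b k i = x0 i := by
        apply flickAux_eq_of_ne hn x0 j hj b k (by omega)
        intro s' h1 h2
        rw [hi]
        exact mod_ne_of_lt' hn (by omega) (by omega)
      simp only [flickAux]
      split
      next hb =>
        simp only [flipBitHC, if_pos hi, hrest, hb, Bool.true_xor]
      next hb =>
        simp only [hrest, (Bool.not_eq_true _).mp hb, Bool.false_xor]

lemma flickTail_eq' {n : ℕ} (x : ℕ → Fin n → Bool) (j : ℕ) (b : ℕ → Bool) (t : ℕ)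
    (ht : t ≤ j) : flickTail x j b t = flickAux (x j) j b (j - t) := by
  unfold flickTail
  split
  next hjt =>
    have : t = j := le_antisymm ht hjt
    subst this
    simp [flickAux]
  next => rfl

lemma delta_index {n j l : ℕ} (hn : 0 < n) (hj : n ≤ j) (hl : l < n) :
    ((j - 1) % n + n - l) % n = (j - (l + 1)) % n := by
  have h1 : (j - 1) % n + n - l = (j - 1) % n + (n - l) := by omega
  rw [h1, Nat.mod_add_mod]
  have h2 : j - 1 + (n - l) = (j - (l + 1)) + n := by omega
  rw [h2, Nat.add_mod_right]

lemma exists_s' {n j : ℕ} (hn : 0 < n) (hj : n ≤ j) (i : Fin n) :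
    ∃ s, 1 ≤ s ∧ s ≤ n ∧ (i : ℕ) = (j - s) % n := by
  have hi : (i : ℕ) < n := i.isLt
  have h1 := Nat.div_add_mod (j - 1 - i) n
  have h2 := Nat.mod_lt (j - 1 - (i : ℕ)) hn
  refine ⟨j - ((i : ℕ) + n * ((j - 1 - i) / n)), by omega, by omega, ?_⟩
  have h3 : j - (j - ((i : ℕ) + n * ((j - 1 - i) / n))) = (i : ℕ) + n * ((j - 1 - i) / n) := by
    omega
  rw [h3, Nat.add_mul_mod_self_left, Nat.mod_eq_of_lt hi]

lemma card_fixed (L d : ℕ) (f : Fin d → Fin L) (hf : Function.Injective f)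
    (g : Fin L → Bool) :
    Nat.card {ω : Fin L → Bool // ∀ s, ω (f s) = g (f s)} = 2 ^ (L - d) := by
  classical
  have e : {ω : Fin L → Bool // ∀ s, ω (f s) = g (f s)} ≃
      ({i : Fin L // i ∉ Set.range f} → Bool) :=
    { toFun := fun ω i => ω.1 i.1
      invFun := fun hfun => ⟨fun i => if hi : i ∈ Set.range f then g i else hfun ⟨i, hi⟩, by
        intro s
        simp only [dif_pos (Set.mem_range_self s)]⟩
      left_inv := by
        rintro ⟨ω, hω⟩
        apply Subtype.ext
        funext i
        by_cases hi : i ∈ Set.range f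
        · obtain ⟨s, rfl⟩ := hi
          simp only [dif_pos (Set.mem_range_self s)]
          exact (hω s).symm
        · simp only [dif_neg hi]
      right_inv := by
        intro hfun
        funext i
        simp only [dif_neg i.2] }
  rw [Nat.card_congr e, Nat.card_eq_fintype_card, Fintype.card_fun]
  have h1 : Fintype.card {i : Fin L // i ∉ Set.range f} =
      L - Fintype.card {i : Fin L // i ∈ Set.range f} := by
    rw [Fintype.card_subtype_compl, Fintype.card_fin]
  have h2 : Fintype.card {i : Fin L // i ∈ Set.range f} = d := by
    rw [Fintype.card_congr (Equiv.ofInjective f hf).symm, Fintype.card_fin]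
  rw [Fintype.card_bool, h1, h2]


/-- **Hitting probability of the flicked tail within one mixing window.** Let `x` be any
snake in the support of `D_{h,L}` on `{0,1}^n` (i.e. `x 0 = h` and each step stalls or
flips bit `t mod n`), let `n ≤ j ≤ L-1`, let `v` be a vertex, let
`k = Δ(x j, v, (j-1) mod n)`, and let `Y` be obtained from `x` by flicking the tail at
`j`. Then `Pr_Y[v ∈ {y_{j-n}, …, y_j}] = 2^{-k}`. -/
theorem stmt_10 (n L : ℕ) (hn : 1 ≤ n) (hL : 1 ≤ L) (h : Fin n → Bool)
    (x : ℕ → Fin n → Bool) (hx0 : x 0 = h)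
    (hstep : ∀ t, t + 1 < L → x (t + 1) = x t ∨ x (t + 1) = flipBitHC (x t) t)
    (j : ℕ) (hjn : n ≤ j) (hjL : j ≤ L - 1) (v : Fin n → Bool) :
    unifPr (fun ω : Fin L → Bool =>
        ∃ t, j - n ≤ t ∧ t ≤ j ∧ flickTail x j (extBits ω) t = v)
      = 1 / 2 ^ delta n (x j) v ((j - 1) % n) := by
  classical
  have hn0 : 0 < n := hn
  have hjL' : j < L := by omega
  set S : Set ℕ :=
    {k | ∀ i : Fin n, (∀ l < k, (i : ℕ) ≠ ((j - 1) % n + n - l) % n) → x j i = v i} with hSdef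
  have hdS : delta n (x j) v ((j - 1) % n) = sInf S := rfl
  set d := delta n (x j) v ((j - 1) % n) with hd
  -- translation of membership in S, for k ≤ n
  have hS_iff : ∀ k, k ≤ n → (k ∈ S ↔
      ∀ i : Fin n, (∀ s, 1 ≤ s → s ≤ k → (i : ℕ) ≠ (j - s) % n) → x j i = v i) := by
    intro k hk
    constructor
    · intro hmem i hi
      apply hmem i
      intro l hl
      rw [delta_index hn0 hjn (by omega)]
      exact hi (l + 1) (by omega) (by omega)
    · intro hmem i hi
      apply hmem i
      intro s h1 h2
      have h3 := hi (s - 1) (by omega)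
      rw [delta_index hn0 hjn (by omega)] at h3
      have hss : s - 1 + 1 = s := by omega
      rwa [hss] at h3
  have hnS : n ∈ S := by
    rw [hS_iff n le_rfl]
    intro i hi
    obtain ⟨s, h1, h2, h3⟩ := exists_s' hn0 hjn i
    exact absurd h3 (hi s h1 h2)
  have hdn : d ≤ n := by rw [hdS]; exact Nat.sInf_le hnS
  have hdS' : d ∈ S := by rw [hdS]; exact Nat.sInf_mem ⟨n, hnS⟩
  have hdmem := (hS_iff d hdn).mp hdS'
  -- the target bit values
  set g' : ℕ → Bool := fun s =>
    xor (x j ⟨(j - s) % n, Nat.mod_lt _ hn0⟩) (v ⟨(j - s) % n, Nat.mod_lt _ hn0⟩) with hg'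
  -- key characterization of flickAux = v
  have keyB : ∀ (b : ℕ → Bool) (k : ℕ), k ≤ n →
      (flickAux (x j) j b k = v ↔
        ((∀ i : Fin n, (∀ s, 1 ≤ s → s ≤ k → (i : ℕ) ≠ (j - s) % n) → x j i = v i) ∧
         ∀ s, 1 ≤ s → s ≤ k → b (j - s) = g' s)) := by
    intro b k hk
    constructor
    · intro heq
      constructor
      · intro i hi
        rw [← flickAux_eq_of_ne hn0 (x j) j hjn b k hk i hi]
        exact congrFun heq i
      · intro s h1 h2
        set i : Fin n := ⟨(j - s) % n, Nat.mod_lt _ hn0⟩ with hidef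
        have h3 := flickAux_eq_of_mem hn0 (x j) j hjn b k hk s h1 h2 i rfl
        have h4 : xor (b (j - s)) (x j i) = v i := by rw [← h3]; exact congrFun heq i
        have h5 : ∀ p q r : Bool, xor p q = r → p = xor q r := by decide
        exact h5 _ _ _ h4
    · rintro ⟨hagree, hbits⟩
      funext i
      by_cases hc : ∃ s, 1 ≤ s ∧ s ≤ k ∧ (i : ℕ) = (j - s) % n
      · obtain ⟨s, h1, h2, h3⟩ := hc
        rw [flickAux_eq_of_mem hn0 (x j) j hjn b k hk s h1 h2 i h3, hbits s h1 h2]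
        have hieq : (⟨(j - s) % n, Nat.mod_lt _ hn0⟩ : Fin n) = i := by
          exact Fin.ext h3.symm
        rw [hg']
        simp only [← hieq]
        have h5 : ∀ p q : Bool, xor (xor p q) p = q := by decide
        exact h5 _ _
      · push_neg at hc
        rw [flickAux_eq_of_ne hn0 (x j) j hjn b k hk i (fun s h1 h2 => hc s h1 h2)]
        exact hagree i (fun s h1 h2 => hc s h1 h2)
  -- event characterization
  have eventIff : ∀ b : ℕ → Bool,
      ((∃ t, j - n ≤ t ∧ t ≤ j ∧ flickTail x j b t = v) ↔
        ∀ s, 1 ≤ s → s ≤ d → b (j - s) = g' s) := by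
    intro b
    constructor
    · rintro ⟨t, ht1, ht2, ht3⟩
      rw [flickTail_eq' x j b t ht2] at ht3
      have hk : j - t ≤ n := by omega
      have hB := (keyB b (j - t) hk).mp ht3
      have hdk : d ≤ j - t := by
        rw [hdS]
        exact Nat.sInf_le ((hS_iff (j - t) hk).mpr hB.1)
      intro s h1 h2
      exact hB.2 s h1 (by omega)
    · intro hb
      refine ⟨j - d, by omega, by omega, ?_⟩
      rw [flickTail_eq' x j b (j - d) (by omega)]
      have hjd : j - (j - d) = d := by omega
      rw [hjd]
      exact (keyB b d hdn).mpr ⟨hdmem, hb⟩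
  -- reformulate as fixing coordinates
  set f : Fin d → Fin L := fun s => ⟨j - ((s : ℕ) + 1), by omega⟩ with hf
  have hfinj : Function.Injective f := by
    intro a b hab
    rw [hf] at hab
    have := Fin.mk.injEq .. ▸ hab
    have h1 : j - ((a : ℕ) + 1) = j - ((b : ℕ) + 1) := Fin.mk.inj_iff.mp hab
    have ha := a.isLt
    have hb := b.isLt
    exact Fin.ext (by omega)
  set g : Fin L → Bool := fun i =>
    xor (x j ⟨(i : ℕ) % n, Nat.mod_lt _ hn0⟩) (v ⟨(i : ℕ) % n, Nat.mod_lt _ hn0⟩) with hg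
  have fixIff : ∀ ω : Fin L → Bool,
      ((∀ s, 1 ≤ s → s ≤ d → extBits ω (j - s) = g' s) ↔ ∀ s : Fin d, ω (f s) = g (f s)) := by
    intro ω
    constructor
    · intro hω s
      have hs := s.isLt
      have h1 := hω ((s : ℕ) + 1) (by omega) (by omega)
      have hlt : j - ((s : ℕ) + 1) < L := by omega
      rw [extBits] at h1
      simp only [dif_pos hlt] at h1
      exact h1
    · intro hω s h1 h2
      have h3 := hω ⟨s - 1, by omega⟩
      have hlt : j - s < L := by omega
      rw [extBits]
      simp only [dif_pos hlt]
      have hval : (((⟨s - 1, by omega⟩ : Fin d) : ℕ) + 1) = s := by simp; omega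
      rw [hf] at h3
      simp only [hval] at h3
      exact h3
  -- compute the probability
  rw [unifPr]
  have hcard : Nat.card {ω : Fin L → Bool //
      ∃ t, j - n ≤ t ∧ t ≤ j ∧ flickTail x j (extBits ω) t = v} = 2 ^ (L - d) := by
    rw [Nat.card_congr (Equiv.subtypeEquivRight (fun ω =>
      (eventIff (extBits ω)).trans (fixIff ω)))]
    exact card_fixed L d f hfinj g
  rw [hcard, Fintype.card_fun, Fintype.card_bool, Fintype.card_fin]
  have hdL : d ≤ L := by omega
  push_cast
  have h2L : (2 : ℝ) ^ L = 2 ^ (L - d) * 2 ^ d := by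
    rw [← pow_add]
    congr 1
    omega
  rw [h2L, div_mul_eq_div_div, div_self (by positivity : ((2:ℝ) ^ (L - d)) ≠ 0)]
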